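/- arXiv:1007.3516 — 7 statements merged into one kernel-verified Lean document; each statement's English description precedes it below -/
import Mathlib

section
/- The energy Hilbert space decomposes orthogonally as H_E = Fin ⊕ Harm, where Fin is the energy-closure of the span of Dirac masses and Harm is the space of harmonic functions of finite energy (Royden decomposition). Specifically, a finite-energy function u (mod constants) is orthogonal to every δ_x if and only if u is harmonic. -/
open scoped BigOperators ComplexOrder Classical

/-- A (resistance) network: a connected weighted graph with symmetric
nonnegative conductances, no self-loops, and finite total conductance at
each vertex. -/
structure Network (V : Type*) where
  c : V → V → ℝ
  nonneg : ∀ x y, 0 ≤ c x y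
  symm : ∀ x y, c x y = c y x
  loopless : ∀ x, c x x = 0
  summ : ∀ x, Summable fun y => c x y
  connected : ∀ x y : V, Relation.ReflTransGen (fun a b => 0 < c a b) x y

namespace Network

variable {V : Type*}

/-- Total conductance `c(x) = Σ_y c(x,y)`. -/
noncomputable def totalCond (N : Network V) (x : V) : ℝ := ∑' y, N.c x y

/-- The (sesquilinear) energy form `E(u,v)`. -/
noncomputable def energy (N : Network V) (u v : V → ℂ) : ℂ :=
  (1/2) * ∑' p : V × V,
    (N.c p.1 p.2 : ℂ) * (starRingEnd ℂ (u p.1) - starRingEnd ℂ (u p.2)) * (v p.1 - v p.2)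

/-- The (real) energy `E(u) = (1/2) Σ c(x,y)|u(x)-u(y)|²`. -/
noncomputable def energyR (N : Network V) (u : V → ℂ) : ℝ :=
  (1/2) * ∑' p : V × V, N.c p.1 p.2 * ‖u p.1 - u p.2‖ ^ 2

/-- `u` has finite energy iff the defining sum converges (absolutely). -/
def FiniteEnergy (N : Network V) (u : V → ℂ) : Prop :=
  Summable fun p : V × V => N.c p.1 p.2 * ‖u p.1 - u p.2‖ ^ 2

/-- The graph Laplacian `(Δu)(x) = Σ_y c(x,y)(u(x)-u(y))`. -/
noncomputable def lap (N : Network V) (u : V → ℂ) (x : V) : ℂ :=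
  ∑' y, (N.c x y : ℂ) * (u x - u y)

end Network

/-- The Dirac mass at `x`. -/
noncomputable def delta {V : Type*} (x : V) : V → ℂ := fun y => if y = x then 1 else 0

/-- Royden decomposition, key orthogonality: a finite-energy
function `u` (mod constants) is orthogonal to every Dirac mass `δ_x` in the
energy inner product if and only if `u` is harmonic; this is precisely the
statement that `H_E = Fin ⊕ Harm` with `Fin = closure(span{δ_x})` and
`Harm` the harmonic functions of finite energy. -/
theorem stmt4 {V : Type*} (N : Network V) (u : V → ℂ) (hu : N.FiniteEnergy u) :
    (∀ x : V, N.energy (delta x) u = 0) ↔ (∀ x : V, N.lap u x = 0) := by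
  suffices key : ∀ x : V, N.energy (delta x) u = N.lap u x by
    constructor
    · intro h x; rw [← key x]; exact h x
    · intro h x; rw [key x]; exact h x
  intro x
  have hinjL : Function.Injective (fun y : V => ((x, y) : V × V)) := by
    intro a b h; simpa using h
  have hinjR : Function.Injective (fun y : V => ((y, x) : V × V)) := by
    intro a b h; simpa using h
  have hrow : Summable (fun y => N.c x y * ‖u x - u y‖ ^ 2) :=
    hu.comp_injective hinjL
  have hcx : Summable (fun y => N.c x y) := N.summ x
  have habs : Summable (fun y => N.c x y * ‖u x - u y‖) := by
    apply Summable.of_nonneg_of_le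
      (fun y => mul_nonneg (N.nonneg x y) (norm_nonneg _))
      (fun y => ?_) ((hcx.add hrow).div_const 2)
    have h1 := N.nonneg x y
    have h2 := norm_nonneg (u x - u y)
    nlinarith [sq_nonneg (‖u x - u y‖ - 1)]
  have hC : Summable (fun y => (N.c x y : ℂ) * (u x - u y)) := by
    apply Summable.of_norm
    have : (fun y => ‖(N.c x y : ℂ) * (u x - u y)‖) = fun y => N.c x y * ‖u x - u y‖ := by
      funext y
      rw [norm_mul, Complex.norm_real, Real.norm_eq_abs, abs_of_nonneg (N.nonneg x y)]
    rw [this]; exact habs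
  have hCneg : Summable (fun y => (N.c y x : ℂ) * (u y - u x)) := by
    have : (fun y => (N.c y x : ℂ) * (u y - u x)) = fun y => -((N.c x y : ℂ) * (u x - u y)) := by
      funext y; rw [N.symm]; ring
    rw [this]; exact hC.neg
  set g : V × V → ℂ := fun p => if p.1 = x then (N.c p.1 p.2 : ℂ) * (u p.1 - u p.2) else 0 with hg
  set h : V × V → ℂ := fun p => if p.2 = x then (N.c p.1 p.2 : ℂ) * (u p.1 - u p.2) else 0 with hh
  have hsg : ∀ p ∉ Set.range (fun y : V => ((x, y) : V × V)), g p = 0 := by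
    intro p hp
    by_cases h1 : p.1 = x
    · exact absurd ⟨p.2, by simp [← h1]⟩ hp
    · simp [hg, h1]
  have hsh : ∀ p ∉ Set.range (fun y : V => ((y, x) : V × V)), h p = 0 := by
    intro p hp
    by_cases h2 : p.2 = x
    · exact absurd ⟨p.1, by simp [← h2]⟩ hp
    · simp [hh, h2]
  have hsg' : Function.support g ⊆ Set.range (fun y : V => ((x, y) : V × V)) := by
    intro p hp
    by_contra hc
    exact hp (hsg p hc)
  have hsh' : Function.support h ⊆ Set.range (fun y : V => ((y, x) : V × V)) := by
    intro p hp
    by_contra hc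
    exact hp (hsh p hc)
  have hgcomp : (g ∘ fun y : V => ((x, y) : V × V)) = fun y => (N.c x y : ℂ) * (u x - u y) := by
    funext y; simp [hg]
  have hhcomp : (h ∘ fun y : V => ((y, x) : V × V)) = fun y => (N.c y x : ℂ) * (u y - u x) := by
    funext y; simp [hh]
  have hGsum : Summable g := by
    rw [← hinjL.summable_iff hsg, hgcomp]; exact hC
  have hHsum : Summable h := by
    rw [← hinjR.summable_iff hsh, hhcomp]; exact hCneg
  have hGt : ∑' p, g p = N.lap u x := by
    rw [← hinjL.tsum_eq hsg']
    simp only [Network.lap]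
    exact tsum_congr fun y => by simp [hg]
  have hHt : ∑' p, h p = -N.lap u x := by
    rw [← hinjR.tsum_eq hsh']
    have : (fun y => h ((fun y : V => ((y, x) : V × V)) y)) = fun y => -((N.c x y : ℂ) * (u x - u y)) := by
      funext y
      have := congrFun hhcomp y
      simp only [Function.comp_apply] at this
      rw [this, N.symm]; ring
    rw [this, tsum_neg]
    rfl
  have hfeq : (fun p : V × V => (N.c p.1 p.2 : ℂ) *
      (starRingEnd ℂ (delta x p.1) - starRingEnd ℂ (delta x p.2)) * (u p.1 - u p.2)) =
      fun p => g p - h p := by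
    funext p
    simp only [hg, hh, delta, apply_ite (starRingEnd ℂ), map_one, map_zero]
    by_cases h1 : p.1 = x <;> by_cases h2 : p.2 = x <;> simp [h1, h2]
  rw [Network.energy, hfeq, Summable.tsum_sub hGsum hHsum, hGt, hHt]
  ring
end

section
/- On the energy Hilbert space H_E of a network with at least two vertices, the multiplication operator M_f (with action (M_f u)(x) = f(x)u(x)) is Hermitian with respect to the energy inner product if and only if f is a real-valued constant function. -/
open scoped BigOperators ComplexOrder Classical

section Aux

open Complex

variable {V : Type*}

lemma delta_mul (f : V → ℂ) (a : V) :
    (fun x => f x * delta a x) = fun x => f a * delta a x := by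
  funext x
  simp only [delta]
  by_cases h : x = a <;> simp [h]

lemma energy_smul_left (N : Network V) (c : ℂ) (u v : V → ℂ) :
    N.energy (fun x => c * u x) v = starRingEnd ℂ c * N.energy u v := by
  unfold Network.energy
  have h : ∀ p : V × V,
      (N.c p.1 p.2 : ℂ) * (starRingEnd ℂ (c * u p.1) - starRingEnd ℂ (c * u p.2)) *
        (v p.1 - v p.2)
      = starRingEnd ℂ c *
        ((N.c p.1 p.2 : ℂ) * (starRingEnd ℂ (u p.1) - starRingEnd ℂ (u p.2)) *
          (v p.1 - v p.2)) := by
    intro p; simp only [map_mul]; ring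
  rw [tsum_congr h, tsum_mul_left]; ring

lemma energy_smul_right (N : Network V) (c : ℂ) (u v : V → ℂ) :
    N.energy u (fun x => c * v x) = c * N.energy u v := by
  unfold Network.energy
  have h : ∀ p : V × V,
      (N.c p.1 p.2 : ℂ) * (starRingEnd ℂ (u p.1) - starRingEnd ℂ (u p.2)) *
        (c * v p.1 - c * v p.2)
      = c * ((N.c p.1 p.2 : ℂ) * (starRingEnd ℂ (u p.1) - starRingEnd ℂ (u p.2)) *
          (v p.1 - v p.2)) := by
    intro p; ring
  rw [tsum_congr h, tsum_mul_left]; ring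

lemma exists_neighbor (N : Network V) (hV : ∃ x y : V, x ≠ y) (a : V) :
    ∃ b, b ≠ a ∧ 0 < N.c a b := by
  obtain ⟨x, y, hxy⟩ := hV
  have hz : ∃ z : V, z ≠ a := by
    by_cases h : x = a
    · exact ⟨y, by rw [h] at hxy; exact hxy.symm⟩
    · exact ⟨x, h⟩
  obtain ⟨z, hz⟩ := hz
  rcases (N.connected a z).cases_head with h | ⟨b, hb, -⟩
  · exact absurd h.symm hz
  · refine ⟨b, ?_, hb⟩
    intro hba
    rw [hba, N.loopless] at hb
    exact lt_irrefl 0 hb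

lemma finEnergy_delta (N : Network V) (a : V) : N.FiniteEnergy (delta a) := by
  unfold Network.FiniteEnergy
  have h1 : Summable (fun p : V × V => if p.1 = a then N.c a p.2 else 0) := by
    have hinj : Function.Injective (fun y : V => ((a, y) : V × V)) := by
      intro x y h; simpa using h
    have h0 : ∀ p : V × V, p ∉ Set.range (fun y : V => ((a, y) : V × V)) →
        (if p.1 = a then N.c a p.2 else 0) = 0 := by
      intro p hp
      have : p.1 ≠ a := by
        intro h
        exact hp ⟨p.2, by rw [Prod.ext_iff]; exact ⟨h.symm, rfl⟩⟩
      simp [this]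
    refine (hinj.summable_iff h0).mp ((N.summ a).congr fun y => ?_)
    simp
  have h2 : Summable (fun p : V × V => if p.2 = a then N.c p.1 a else 0) := by
    have hinj : Function.Injective (fun y : V => ((y, a) : V × V)) := by
      intro x y h; simpa using h
    have h0 : ∀ p : V × V, p ∉ Set.range (fun y : V => ((y, a) : V × V)) →
        (if p.2 = a then N.c p.1 a else 0) = 0 := by
      intro p hp
      have : p.2 ≠ a := by
        intro h
        exact hp ⟨p.1, by rw [Prod.ext_iff]; exact ⟨rfl, h.symm⟩⟩
      simp [this]
    have hsum : Summable (fun y : V => N.c y a) := by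
      have := N.summ a
      apply this.congr
      intro y; exact (N.symm a y)
    refine (hinj.summable_iff h0).mp (hsum.congr fun y => ?_)
    simp
  refine Summable.of_nonneg_of_le (fun p => ?_) (fun p => ?_) (h1.add h2)
  · have := N.nonneg p.1 p.2
    positivity
  · by_cases hp1 : p.1 = a <;> by_cases hp2 : p.2 = a <;>
      simp [delta, hp1, hp2, N.nonneg, N.symm, N.loopless]

lemma energy_delta_delta (N : Network V) (a b : V) (hab : a ≠ b) :
    N.energy (delta a) (delta b) = -(N.c a b : ℂ) := by
  unfold Network.energy
  rw [tsum_eq_sum (s := ({(a, b), (b, a)} : Finset (V × V))) ?_]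
  · rw [Finset.sum_pair (by simp [Prod.ext_iff, hab])]
    simp only [delta]
    simp [hab, hab.symm, N.symm a b]
    ring
  · intro p hp
    simp only [Finset.mem_insert, Finset.mem_singleton, Prod.ext_iff, not_or, not_and_or] at hp
    by_cases h1 : p.1 = a <;> by_cases h2 : p.2 = a <;>
      by_cases h3 : p.1 = b <;> by_cases h4 : p.2 = b <;>
      simp_all [delta, N.loopless]

lemma energy_delta_self_ne (N : Network V) (hV : ∃ x y : V, x ≠ y) (a : V) :
    N.energy (delta a) (delta a) ≠ 0 := by
  obtain ⟨b, hba, hcb⟩ := exists_neighbor N hV a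
  have key : N.energy (delta a) (delta a)
      = (((1 / 2 : ℝ) * ∑' p : V × V, N.c p.1 p.2 * ‖delta a p.1 - delta a p.2‖ ^ 2 : ℝ) : ℂ) := by
    unfold Network.energy
    rw [Complex.ofReal_mul, Complex.ofReal_tsum]
    congr 1
    · norm_num
    · apply tsum_congr
      intro p
      by_cases h1 : p.1 = a <;> by_cases h2 : p.2 = a <;>
        simp [delta, h1, h2]
  rw [key]
  rw [Complex.ofReal_ne_zero]
  have hpos : 0 < ∑' p : V × V, N.c p.1 p.2 * ‖delta a p.1 - delta a p.2‖ ^ 2 := by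
    refine Summable.tsum_pos (finEnergy_delta N a) (fun p => ?_) (a, b) ?_
    · have := N.nonneg p.1 p.2; positivity
    · simp [delta, hba, hba.symm]
      exact hcb
  positivity

end Aux

/-- On a network with at least two vertices, the multiplication
operator `M_f` is Hermitian w.r.t. the energy inner product iff `f` is a
real-valued constant function. -/
theorem stmt5 {V : Type*} (N : Network V) (hV : ∃ x y : V, x ≠ y) (f : V → ℂ) :
    (∀ u v : V → ℂ, N.FiniteEnergy u → N.FiniteEnergy v →
        N.energy (fun x => f x * u x) v = N.energy u (fun x => f x * v x))
      ↔ ∃ r : ℝ, ∀ x : V, f x = (r : ℂ) := by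
  constructor
  · intro h
    have hfin : ∀ a : V, N.FiniteEnergy (delta a) := finEnergy_delta N
    have hreal : ∀ a : V, starRingEnd ℂ (f a) = f a := by
      intro a
      have hE := energy_delta_self_ne N hV a
      have key := h (delta a) (delta a) (hfin a) (hfin a)
      rw [delta_mul f a, energy_smul_left, energy_smul_right] at key
      exact mul_right_cancel₀ hE key
    have hedge : ∀ a b : V, 0 < N.c a b → f a = f b := by
      intro a b hc
      have hab : a ≠ b := by
        intro h'; rw [h', N.loopless] at hc; exact lt_irrefl 0 hc
      have key := h (delta a) (delta b) (hfin a) (hfin b)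
      rw [delta_mul f a, delta_mul f b, energy_smul_left, energy_smul_right,
        energy_delta_delta N a b hab] at key
      have hE : -(N.c a b : ℂ) ≠ 0 := by
        simp only [ne_eq, neg_eq_zero, Complex.ofReal_eq_zero]
        exact ne_of_gt hc
      have := mul_right_cancel₀ hE key
      rw [hreal a] at this
      exact this
    obtain ⟨x0, -, -⟩ := hV
    refine ⟨(f x0).re, fun x => ?_⟩
    have hx0 : f x0 = ((f x0).re : ℂ) := (Complex.conj_eq_iff_re.mp (hreal x0)).symm
    have hconst : f x0 = f x := by
      induction N.connected x0 x with
      | refl => rfl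
      | tail _ hstep ih => exact ih.trans (hedge _ _ hstep)
    rw [← hconst]
    exact hx0
  · rintro ⟨r, hr⟩ u v _ _
    unfold Network.energy
    congr 1
    apply tsum_congr
    intro p
    simp only [hr, map_mul, Complex.conj_ofReal]
    ring
end

section
/- For a function f on the vertices (with f(o)=0 convention), the multiplication operator M_f is bounded on H_E with ‖M_f‖ ≤ b if and only if the function s_f(x,y) := (b² − f(x)·conj(f(y)))·⟨v_x, v_y⟩_E is positive semidefinite on X × X, where X = V \ {o}; i.e., for every finite F ⊆ X and coefficients ξ: F → ℂ, Σ_{x,y∈F} conj(ξ_x) ξ_y s_f(x,y) ≥ 0. -/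
/-!
Passing to the adjoint, `M_f` is bounded with `‖M_f‖ ≤ b` iff there is an operator `T` with
`‖T‖ ≤ b` and `T v_x = conj (f x) • v_x`. Since the `v_x` span a dense subspace, such a `T`
exists iff `‖∑ ξ_x conj (f x) • v_x‖ ≤ b ‖∑ ξ_x • v_x‖` for all finitely supported `ξ`
(extension of a bounded map from a dense subspace). Expanding both norms as Gram sums, this
inequality is exactly `∑ conj ξ_x ξ_y s_f(x,y) ≥ 0`.
-/

open scoped InnerProductSpace ComplexOrder BigOperators Classical

/-- Dirac's rank-one operator `|a⟩⟨b| : u ↦ ⟪b,u⟫ • a`. -/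
noncomputable def rankOne {H : Type*} [NormedAddCommGroup H] [InnerProductSpace ℂ H]
    (a b : H) : H →L[ℂ] H := (innerSL ℂ b).smulRight a

theorem sum_sum_conj_mul_inner_eq_norm_sq {𝕜 X E : Type*} [RCLike 𝕜] [NormedAddCommGroup E]
    [InnerProductSpace 𝕜 E] (g : X → E) (F : Finset X) (ξ : X → 𝕜) :
    ∑ x ∈ F, ∑ y ∈ F, starRingEnd 𝕜 (ξ x) * ξ y * ⟪g x, g y⟫_𝕜
      = (‖∑ x ∈ F, ξ x • g x‖ : 𝕜) ^ 2 := by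
  rw [← inner_self_eq_norm_sq_to_K, sum_inner]
  refine Finset.sum_congr rfl fun x _ => ?_
  rw [inner_sum]
  refine Finset.sum_congr rfl fun y _ => ?_
  rw [inner_smul_left, inner_smul_right]
  ring

theorem sum_sum_kernel_eq_sub_norm_sq {X H : Type*} [NormedAddCommGroup H]
    [InnerProductSpace ℂ H] (v : X → H) (f : X → ℂ) (b : ℝ) (F : Finset X) (ξ : X → ℂ) :
    ∑ x ∈ F, ∑ y ∈ F, starRingEnd ℂ (ξ x) * ξ y *
        (((b : ℂ) ^ 2 - f x * starRingEnd ℂ (f y)) * ⟪v x, v y⟫_ℂ)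
      = ((b ^ 2 * ‖∑ x ∈ F, ξ x • v x‖ ^ 2
          - ‖∑ x ∈ F, ξ x • starRingEnd ℂ (f x) • v x‖ ^ 2 : ℝ) : ℂ) := by
  have expand : ∀ x y : X,
      starRingEnd ℂ (ξ x) * ξ y * (((b : ℂ) ^ 2 - f x * starRingEnd ℂ (f y)) * ⟪v x, v y⟫_ℂ)
        = (b : ℂ) ^ 2 * (starRingEnd ℂ (ξ x) * ξ y * ⟪v x, v y⟫_ℂ)
          - starRingEnd ℂ (ξ x) * ξ y *
              ⟪starRingEnd ℂ (f x) • v x, starRingEnd ℂ (f y) • v y⟫_ℂ := by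
    intro x y
    rw [inner_smul_left, inner_smul_right, Complex.conj_conj]
    ring
  simp only [expand, Finset.sum_sub_distrib, ← Finset.mul_sum,
    sum_sum_conj_mul_inner_eq_norm_sq v, sum_sum_conj_mul_inner_eq_norm_sq (fun x => _ • v x),
    RCLike.ofReal_eq_complex_ofReal]
  push_cast
  ring

theorem ContinuousLinearMap.forall_inner_adjoint_eq_mul_inner_iff {𝕜 E : Type*} [RCLike 𝕜]
    [NormedAddCommGroup E] [InnerProductSpace 𝕜 E] [CompleteSpace E] (T : E →L[𝕜] E)
    (w : E) (c : 𝕜) :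
    (∀ u, ⟪w, T.adjoint u⟫_𝕜 = c * ⟪w, u⟫_𝕜) ↔ T w = starRingEnd 𝕜 c • w := by
  simp only [ext_iff_inner_right 𝕜 (x := T w), adjoint_inner_right, inner_smul_left,
    RCLike.conj_conj]

theorem exists_opNorm_le_apply_eq_iff {𝕜 X E F : Type*} [NontriviallyNormedField 𝕜]
    [NormedAddCommGroup E] [NormedSpace 𝕜 E] [NormedAddCommGroup F] [NormedSpace 𝕜 F]
    [CompleteSpace F] {g : X → E} (hg : Dense (Submodule.span 𝕜 (Set.range g) : Set E))
    (h : X → F) {b : ℝ} (hb : 0 ≤ b) :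
    (∃ T : E →L[𝕜] F, ‖T‖ ≤ b ∧ ∀ x, T (g x) = h x) ↔
      ∀ (S : Finset X) (ξ : X → 𝕜), ‖∑ x ∈ S, ξ x • h x‖ ≤ b * ‖∑ x ∈ S, ξ x • g x‖ := by
  constructor
  · rintro ⟨T, hT, hTg⟩ S ξ
    calc ‖∑ x ∈ S, ξ x • h x‖ = ‖T (∑ x ∈ S, ξ x • g x)‖ := by simp [map_sum, hTg]
      _ ≤ ‖T‖ * ‖∑ x ∈ S, ξ x • g x‖ := T.le_opNorm _
      _ ≤ b * ‖∑ x ∈ S, ξ x • g x‖ := by gcongr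
  · intro hbound
    set G := Finsupp.linearCombination 𝕜 g
    set L := Finsupp.linearCombination 𝕜 h
    have hGL : ∀ ξ, ‖L ξ‖ ≤ b * ‖G ξ‖ := fun ξ => hbound ξ.support ξ
    have hG : DenseRange G := by
      rwa [DenseRange, ← LinearMap.coe_range, Finsupp.range_linearCombination]
    refine ⟨L.extendOfNorm G, LinearMap.opNorm_extendOfNorm_le hG hb hGL, fun x => ?_⟩
    simpa [G, L] using LinearMap.extendOfNorm_eq hG ⟨b, hGL⟩ (Finsupp.single x 1)

/-- `M_f` is bounded on `H_E` with `‖M_f‖ ≤ b` (i.e. there is a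
bounded operator acting as multiplication by `f`, where multiplication by `f`
is expressed through the energy kernel: `⟪v_x, Mu⟫ = f(x)⟪v_x, u⟫`) iff
`s_f(x,y) = (b² − f(x)conj(f(y)))⟪v_x,v_y⟫` is positive semidefinite on `X×X`. -/
theorem stmt8 {X H : Type*} [NormedAddCommGroup H] [InnerProductSpace ℂ H] [CompleteSpace H]
    (v : X → H)
    (hdense : Dense (↑(Submodule.span ℂ (Set.range v)) : Set H))
    (f : X → ℂ) (b : ℝ) (hb : 0 ≤ b) :
    (∃ M : H →L[ℂ] H, ‖M‖ ≤ b ∧ ∀ (u : H) (x : X), ⟪v x, M u⟫_ℂ = f x * ⟪v x, u⟫_ℂ) ↔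
    (∀ (F : Finset X) (ξ : X → ℂ),
      0 ≤ ∑ x ∈ F, ∑ y ∈ F, starRingEnd ℂ (ξ x) * ξ y *
            (((b : ℂ) ^ 2 - f x * starRingEnd ℂ (f y)) * ⟪v x, v y⟫_ℂ)) := by
  calc (∃ M : H →L[ℂ] H, ‖M‖ ≤ b ∧ ∀ u x, ⟪v x, M u⟫_ℂ = f x * ⟪v x, u⟫_ℂ)
      ↔ ∃ T : H →L[ℂ] H, ‖T‖ ≤ b ∧ ∀ x, T (v x) = starRingEnd ℂ (f x) • v x := by
        rw [ContinuousLinearMap.adjoint.surjective.exists]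
        simp only [LinearIsometryEquiv.norm_map, forall_comm (α := H),
          ContinuousLinearMap.forall_inner_adjoint_eq_mul_inner_iff]
    _ ↔ ∀ (F : Finset X) (ξ : X → ℂ), ‖∑ x ∈ F, ξ x • starRingEnd ℂ (f x) • v x‖
          ≤ b * ‖∑ x ∈ F, ξ x • v x‖ := exists_opNorm_le_apply_eq_iff hdense _ hb
    _ ↔ _ := by
        refine forall₂_congr fun F ξ => ?_
        rw [sum_sum_kernel_eq_sub_norm_sq, Complex.zero_le_real, sub_nonneg, ← mul_pow,
          pow_le_pow_iff_left₀ (norm_nonneg _) (by positivity) two_ne_zero]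
end

section
/- For any vertex x ≠ o, the multiplication operator M_x := M_{δ_x} by the Dirac mass at x is a bounded operator on H_E with operator norm ‖M_x‖ = √(c(x)·R(x)), where R(x) = E(v_x) is the effective resistance between x and o. -/
open scoped BigOperators ComplexOrder Classical

open scoped InnerProductSpace ComplexOrder BigOperators Classical

/-! Testing `M` against the dense family `v y` shows `M u = ⟪v x, u⟫ • δx`, i.e. `M` is the
rank-one operator `|δx⟩⟨v x|`, whose norm is `‖δx‖ ‖v x‖ = √(c(x) R(x))`. -/

section

variable {𝕜 E : Type*} [RCLike 𝕜] [NormedAddCommGroup E] [InnerProductSpace 𝕜 E]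

theorem eq_of_forall_inner_eq_of_dense_span {S : Set E}
    (hS : Dense (Submodule.span 𝕜 S : Set E)) {a b : E}
    (h : ∀ w ∈ S, ⟪w, a⟫_𝕜 = ⟪w, b⟫_𝕜) : a = b := by
  have hspan : Submodule.span 𝕜 S ≤ (𝕜 ∙ (a - b))ᗮ :=
    Submodule.span_le.mpr fun w hw =>
      Submodule.mem_orthogonal_singleton_iff_inner_left.mpr <| by
        rw [inner_sub_right, h w hw, sub_self]
  refine hS.eq_of_inner_right 𝕜 fun w hw => ?_
  rw [← sub_eq_zero, ← inner_sub_right]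
  exact Submodule.mem_orthogonal_singleton_iff_inner_left.mp (hspan hw)

end

section

variable {H : Type*} [NormedAddCommGroup H] [InnerProductSpace ℂ H]

theorem rankOne_apply (a b u : H) : rankOne a b u = ⟪b, u⟫_ℂ • a := rfl

theorem norm_rankOne (a b : H) : ‖rankOne a b‖ = ‖a‖ * ‖b‖ := by
  rw [rankOne, ContinuousLinearMap.norm_smulRight_apply, innerSL_apply_norm, mul_comm]

end

theorem stmt10_general {V H : Type*} [NormedAddCommGroup H] [InnerProductSpace ℂ H]
    (N : Network V) (o x : V) (v : V → H) (δx : H)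
    (hdense : Dense (↑(Submodule.span ℂ (v '' {y | y ≠ o})) : Set H))
    (hδ : ∀ y : V, y ≠ o → ⟪v y, δx⟫_ℂ = if y = x then 1 else 0)
    (hc : ‖δx‖ ^ 2 = N.totalCond x)
    (M : H →L[ℂ] H)
    (hM : ∀ (u : H) (y : V), y ≠ o →
      ⟪v y, M u⟫_ℂ = (if y = x then (1 : ℂ) else 0) * ⟪v y, u⟫_ℂ) :
    ‖M‖ = Real.sqrt (N.totalCond x * ‖v x‖ ^ 2) := by
  have hM_rankOne : M = rankOne δx (v x) := by
    ext u
    refine eq_of_forall_inner_eq_of_dense_span hdense ?_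
    rintro _ ⟨y, hy, rfl⟩
    rw [hM u y hy, rankOne_apply, inner_smul_right, hδ y hy]
    split_ifs with hyx
    · rw [hyx, one_mul, mul_one]
    · rw [zero_mul, mul_zero]
  rw [hM_rankOne, norm_rankOne, ← hc, ← mul_pow, Real.sqrt_sq (by positivity)]

/-- for `x ≠ o`, the multiplication operator `M_x = M_{δ_x}`
(characterized via the energy kernel: `⟪v_y, Mu⟫ = δ_x(y)⟪v_y,u⟫`) is bounded
with `‖M_x‖ = √(c(x)·R(x))`, where `R(x) = E(v_x) = ‖v_x‖²` and
`c(x) = E(δ_x) = ‖δ_x‖²`. -/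
theorem stmt10 {V H : Type*} [NormedAddCommGroup H] [InnerProductSpace ℂ H] [CompleteSpace H]
    (N : Network V) (o x : V) (hx : x ≠ o) (v : V → H) (δx : H)
    (hdense : Dense (↑(Submodule.span ℂ (v '' {y | y ≠ o})) : Set H))
    (hδ : ∀ y : V, y ≠ o → ⟪v y, δx⟫_ℂ = if y = x then 1 else 0)
    (hc : ‖δx‖ ^ 2 = N.totalCond x)
    (M : H →L[ℂ] H)
    (hM : ∀ (u : H) (y : V), y ≠ o →
      ⟪v y, M u⟫_ℂ = (if y = x then (1 : ℂ) else 0) * ⟪v y, u⟫_ℂ) :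
    ‖M‖ = Real.sqrt (N.totalCond x * ‖v x‖ ^ 2) :=
  stmt10_general N o x v δx hdense hδ hc M hM
end

section
/- For any vertex x ≠ o, the multiplication operator M_x = M_{δ_x} on H_E is the rank-one operator M_x = |δ_x⟩⟨v_x|, i.e., M_x u = ⟨v_x, u⟩_E · δ_x for all u ∈ H_E; equivalently its adjoint is M_x* = |v_x⟩⟨δ_x|, i.e., M_x* u = ⟨δ_x, u⟩_E · v_x. -/
open scoped InnerProductSpace ComplexOrder BigOperators Classical

/-!
Testing `M u` against a generator `v_y` of the dense span gives
`⟪v_y, M u⟫ = [y = x] ⟪v_x, u⟫ = ⟪v_y, δ_x⟫ ⟪v_x, u⟫ = ⟪v_y, ⟪v_x, u⟫ • δ_x⟫`,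
so `M = |δ_x⟩⟨v_x|`; the adjoint of `|a⟩⟨b|` is `|b⟩⟨a|`.
-/

theorem rankOne_eq_innerProductSpace_rankOne {H : Type*} [NormedAddCommGroup H]
    [InnerProductSpace ℂ H] (a b : H) : rankOne a b = InnerProductSpace.rankOne ℂ a b :=
  rfl

theorem adjoint_rankOne {H : Type*} [NormedAddCommGroup H] [InnerProductSpace ℂ H]
    [CompleteSpace H] (a b : H) : ContinuousLinearMap.adjoint (rankOne a b) = rankOne b a := by
  simp only [rankOne_eq_innerProductSpace_rankOne, InnerProductSpace.adjoint_rankOne]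

theorem eq_of_inner_right_of_dense_span {𝕜 E : Type*} [RCLike 𝕜] [NormedAddCommGroup E]
    [InnerProductSpace 𝕜 E] {S : Set E} (hS : Dense (Submodule.span 𝕜 S : Set E)) {a b : E}
    (h : ∀ s ∈ S, ⟪s, a⟫_𝕜 = ⟪s, b⟫_𝕜) : a = b := by
  have hspan : Submodule.span 𝕜 S ≤ (𝕜 ∙ (a - b))ᗮ := Submodule.span_le.mpr fun s hs => by
    simp [Submodule.mem_orthogonal_singleton_iff_inner_left, inner_sub_right, h s hs]
  refine hS.eq_of_inner_right 𝕜 fun w hw => ?_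
  rw [← sub_eq_zero, ← inner_sub_right]
  exact Submodule.mem_orthogonal_singleton_iff_inner_left.mp (hspan hw)

theorem eq_rankOne_of_inner_generators {V H : Type*} [NormedAddCommGroup H] [InnerProductSpace ℂ H]
    {o x : V} {v : V → H} {δx : H}
    (hdense : Dense (↑(Submodule.span ℂ (v '' {y | y ≠ o})) : Set H))
    (hδ : ∀ y : V, y ≠ o → ⟪v y, δx⟫_ℂ = if y = x then 1 else 0)
    {M : H →L[ℂ] H}
    (hM : ∀ (u : H) (y : V), y ≠ o →
      ⟪v y, M u⟫_ℂ = (if y = x then (1 : ℂ) else 0) * ⟪v y, u⟫_ℂ) :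
    M = rankOne δx (v x) := by
  ext u
  refine eq_of_inner_right_of_dense_span hdense ?_
  rintro _ ⟨y, hy, rfl⟩
  rw [hM u y hy, rankOne_eq_innerProductSpace_rankOne, InnerProductSpace.rankOne_apply,
    inner_smul_right, hδ y hy]
  split_ifs with hyx
  · rw [hyx]; ring
  · ring

theorem stmt11_general {V H : Type*} [NormedAddCommGroup H] [InnerProductSpace ℂ H] [CompleteSpace H]
    (o x : V) (v : V → H) (δx : H)
    (hdense : Dense (↑(Submodule.span ℂ (v '' {y | y ≠ o})) : Set H))
    (hδ : ∀ y : V, y ≠ o → ⟪v y, δx⟫_ℂ = if y = x then 1 else 0)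
    (M : H →L[ℂ] H)
    (hM : ∀ (u : H) (y : V), y ≠ o →
      ⟪v y, M u⟫_ℂ = (if y = x then (1 : ℂ) else 0) * ⟪v y, u⟫_ℂ) :
    ∀ u : H, M u = ⟪v x, u⟫_ℂ • δx ∧
      ContinuousLinearMap.adjoint M u = ⟪δx, u⟫_ℂ • v x := by
  intro u
  rw [eq_rankOne_of_inner_generators hdense hδ hM, adjoint_rankOne]
  exact ⟨rfl, rfl⟩

/-- the multiplication operator `M_x` by the Dirac mass `δ_x`
(`x ≠ o`) is the rank-one operator `|δ_x⟩⟨v_x|`: `M_x u = ⟪v_x,u⟫ • δ_x`, and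
its adjoint is `|v_x⟩⟨δ_x|`: `M_x* u = ⟪δ_x,u⟫ • v_x`. -/
theorem stmt11 {V H : Type*} [NormedAddCommGroup H] [InnerProductSpace ℂ H] [CompleteSpace H]
    (o x : V) (hx : x ≠ o) (v : V → H) (δx : H)
    (hdense : Dense (↑(Submodule.span ℂ (v '' {y | y ≠ o})) : Set H))
    (hδ : ∀ y : V, y ≠ o → ⟪v y, δx⟫_ℂ = if y = x then 1 else 0)
    (M : H →L[ℂ] H)
    (hM : ∀ (u : H) (y : V), y ≠ o →
      ⟪v y, M u⟫_ℂ = (if y = x then (1 : ℂ) else 0) * ⟪v y, u⟫_ℂ) :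
    ∀ u : H, M u = ⟪v x, u⟫_ℂ • δx ∧
      ContinuousLinearMap.adjoint M u = ⟪δx, u⟫_ℂ • v x :=
  stmt11_general o x v δx hdense hδ M hM
end

section
/- The multiplication operator M_f on H_E satisfies the norm bound ‖M_f‖ ≤ Σ_{x∈X} |f(x)|·√(c(x)R(x)); in particular, M_f is bounded whenever this sum converges, and in that case M_f = Σ_{x∈X} f(x)·|δ_x⟩⟨v_x| with the sum converging in operator norm. -/
open scoped BigOperators ComplexOrder Classical

open scoped InnerProductSpace ComplexOrder BigOperators Classical

set_option maxHeartbeats 4000000 in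
/-- `‖M_f‖ ≤ Σ_{x∈X} |f(x)|√(c(x)R(x))`; in particular, when
this sum converges, multiplication by `f` is a bounded operator on `H_E` and
`M_f = Σ_x f(x)|δ_x⟩⟨v_x|`, with the sum converging in operator norm. -/
theorem stmt14 {V H : Type*} [NormedAddCommGroup H] [InnerProductSpace ℂ H] [CompleteSpace H]
    (N : Network V) (o : V) (v δ : V → H)
    (hδ : ∀ x y : V, x ≠ o → y ≠ o →
      ⟪v y, δ x⟫_ℂ = if y = x then 1 else 0)
    (hc : ∀ x : V, x ≠ o → ‖δ x‖ ^ 2 = N.totalCond x)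
    (f : V → ℂ) (hfo : f o = 0)
    (hsum : Summable fun x : V => ‖f x‖ * Real.sqrt (N.totalCond x * ‖v x‖ ^ 2)) :
    ∃ M : H →L[ℂ] H,
      HasSum (fun x : V => f x • rankOne (δ x) (v x)) M ∧
      ‖M‖ ≤ ∑' x : V, ‖f x‖ * Real.sqrt (N.totalCond x * ‖v x‖ ^ 2) ∧
      ∀ (u : H) (y : V), y ≠ o → ⟪v y, M u⟫_ℂ = f y * ⟪v y, u⟫_ℂ := by
  classical
  set F : V → (H →L[ℂ] H) := fun x => f x • rankOne (δ x) (v x) with hF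
  have hbound : ∀ x : V, ‖F x‖ ≤ ‖f x‖ * Real.sqrt (N.totalCond x * ‖v x‖ ^ 2) := by
    intro x
    by_cases hx : x = o
    · subst hx
      simp only [hF, hfo, zero_smul, norm_zero]
      positivity
    · have h1 : ‖F x‖ ≤ ‖f x‖ * (‖v x‖ * ‖δ x‖) := by
        rw [hF]
        simp only [norm_smul]
        gcongr
        rw [rankOne, ContinuousLinearMap.norm_smulRight_apply, innerSL_apply_norm]
      have h2 : Real.sqrt (N.totalCond x * ‖v x‖ ^ 2) = ‖v x‖ * ‖δ x‖ := by
        rw [← hc x hx]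
        have : ‖δ x‖ ^ 2 * ‖v x‖ ^ 2 = (‖v x‖ * ‖δ x‖) ^ 2 := by ring
        rw [this, Real.sqrt_sq (by positivity)]
      rw [h2]; exact h1
  have hnorm : Summable fun x => ‖F x‖ :=
    Summable.of_nonneg_of_le (fun x => norm_nonneg _) hbound hsum
  have hFsumm : Summable F := hnorm.of_norm
  obtain ⟨M, hM⟩ := hFsumm
  refine ⟨M, hM, ?_, ?_⟩
  · calc ‖M‖ = ‖∑' x, F x‖ := by rw [hM.tsum_eq]
      _ ≤ ∑' x, ‖F x‖ := norm_tsum_le_tsum_norm hnorm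
      _ ≤ ∑' x : V, ‖f x‖ * Real.sqrt (N.totalCond x * ‖v x‖ ^ 2) :=
        Summable.tsum_le_tsum hbound hnorm hsum
  · intro u y hy
    have happly : HasSum (fun x => F x u) (M u) :=
      (ContinuousLinearMap.apply ℂ H u).hasSum hM
    have hinner : HasSum (fun x => ⟪v y, F x u⟫_ℂ) ⟪v y, M u⟫_ℂ :=
      (innerSL ℂ (v y)).hasSum happly
    have heq : (fun x => ⟪v y, F x u⟫_ℂ) =
        fun x => if x = y then f y * ⟪v y, u⟫_ℂ else 0 := by
      funext x
      have : ⟪v y, F x u⟫_ℂ = f x * (⟪v x, u⟫_ℂ * ⟪v y, δ x⟫_ℂ) := by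
        simp [hF, rankOne, inner_smul_right, ContinuousLinearMap.smulRight_apply, mul_comm, mul_assoc, mul_left_comm]
      rw [this]
      by_cases hx : x = o
      · subst hx
        simp [hfo, Ne.symm hy]
      · rw [hδ x y hx hy]
        by_cases hxy : x = y
        · subst hxy; simp
        · simp [Ne.symm hxy, hxy]
    rw [heq] at hinner
    exact hinner.unique (hasSum_ite_eq y (f y * ⟪v y, u⟫_ℂ))
end

section
/- Suppose that on a network the only harmonic functions of finite energy are constants (Harm = 0), so H_E = Fin. Then every nonzero multiplicative linear functional γ on the algebra A_E of bounded finite-energy functions (vanishing at o) which is determined by its values on {δ_x} is evaluation at a unique vertex y: there is a unique y ∈ V with γ(δ_y) ≠ 0, and γ(v) = v(y) for all v ∈ A_E. In particular, from v·δ_x = v(x)δ_x one derives γ(δ_x)(γ(v) − v(x)) = 0 for all x and v. -/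
open scoped BigOperators ComplexOrder Classical

/-- if `Harm = 0`, every nonzero multiplicative linear functional
on the algebra `A_E` of bounded finite-energy functions which is determined by
its values on the Dirac masses is evaluation at a unique vertex. -/
theorem stmt19 {V : Type*} (N : Network V) (o : V)
    (Ae : (V → ℂ) → Prop)
    (hAe : ∀ u, Ae u ↔ N.FiniteEnergy u ∧ BddAbove (Set.range fun x => ‖u x‖))
    (hHarm : ∀ u : V → ℂ, N.FiniteEnergy u → (∀ x, N.lap u x = 0) → ∃ k : ℂ, ∀ x, u x = k)
    (γ : (V → ℂ) → ℂ)
    (hadd : ∀ u w, Ae u → Ae w → γ (u + w) = γ u + γ w)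
    (hsmul : ∀ (a : ℂ) (u), Ae u → γ (a • u) = a * γ u)
    (hmul : ∀ u w, Ae u → Ae w → γ (fun x => u x * w x) = γ u * γ w)
    (hdet : (∀ x : V, γ (delta x) = 0) → ∀ u, Ae u → γ u = 0)
    (hnz : ∃ u, Ae u ∧ γ u ≠ 0) :
    (∀ (x : V) (v : V → ℂ), Ae v → γ (delta x) * (γ v - v x) = 0) ∧
    ∃! y : V, γ (delta y) ≠ 0 ∧ ∀ v, Ae v → γ v = v y := by

  classical
  -- delta x is in Ae
  have hAeDelta : ∀ x : V, Ae (delta x) := by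
    intro x
    rw [hAe]
    constructor
    · -- finite energy
      unfold Network.FiniteEnergy
      set f : V × V → ℝ := fun p => N.c p.1 p.2 * ‖delta x p.1 - delta x p.2‖ ^ 2 with hf
      set f1 : V × V → ℝ := fun p => if p.1 = x then f p else 0 with hf1
      set f2 : V × V → ℝ := fun p => if p.1 = x then 0 else f p with hf2
      have hfeq : f = f1 + f2 := by
        funext p
        simp only [hf1, hf2, Pi.add_apply]
        by_cases h : p.1 = x <;> simp [h]
      have hnn : ∀ p : V × V, 0 ≤ f p := by
        intro p
        have := N.nonneg p.1 p.2
        positivity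
      have h1 : Summable f1 := by
        have hinj : Function.Injective (fun y : V => ((x, y) : V × V)) := by
          intro a b h
          simpa using h
        rw [← hinj.summable_iff]
        · apply Summable.of_nonneg_of_le _ _ (N.summ x)
          · intro y
            simp only [Function.comp, hf1]
            split
            · exact hnn _
            · exact le_refl 0
          · intro y
            simp only [Function.comp, hf1, hf]
            by_cases hy : y = x
            · simp [hy, delta, N.loopless x]
            · simp [delta, hy]
        · intro p hp
          have : p.1 ≠ x := by
            intro h
            exact hp ⟨p.2, by simp [← h]⟩
          simp [hf1, this]
      have h2 : Summable f2 := by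
        have hinj : Function.Injective (fun y : V => ((y, x) : V × V)) := by
          intro a b h
          simpa using h
        rw [← hinj.summable_iff]
        · apply Summable.of_nonneg_of_le _ _ (N.summ x)
          · intro y
            simp only [Function.comp, hf2]
            split
            · exact le_refl 0
            · exact hnn _
          · intro y
            simp only [Function.comp, hf2, hf]
            by_cases hy : y = x
            · simp [hy, N.nonneg]
            · simp [delta, hy, N.symm y x]
        · intro p hp
          have hne : p.2 ≠ x := by
            intro h
            exact hp ⟨p.1, by simp [← h]⟩
          by_cases h : p.1 = x
          · simp [hf2, h]
          · simp [hf2, hf, h, delta, hne]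
      rw [hfeq]
      exact h1.add h2
    · refine ⟨1, ?_⟩
      rintro r ⟨y, rfl⟩
      simp only [delta]
      split <;> simp
  -- Part 1
  have part1 : ∀ (x : V) (v : V → ℂ), Ae v → γ (delta x) * (γ v - v x) = 0 := by
    intro x v hv
    have key : (fun z => v z * delta x z) = (v x) • delta x := by
      funext z
      simp only [delta, Pi.smul_apply, smul_eq_mul]
      by_cases h : z = x <;> simp [h]
    have h1 : γ v * γ (delta x) = v x * γ (delta x) := by
      rw [← hmul v (delta x) hv (hAeDelta x), key, hsmul (v x) (delta x) (hAeDelta x)]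
    ring_nf
    ring_nf at h1
    linear_combination h1
  refine ⟨part1, ?_⟩
  -- existence of y
  have hex : ∃ y : V, γ (delta y) ≠ 0 := by
    by_contra h
    push_neg at h
    obtain ⟨u, hu, hune⟩ := hnz
    exact hune (hdet h u hu)
  obtain ⟨y, hy⟩ := hex
  have heval : ∀ v, Ae v → γ v = v y := by
    intro v hv
    have := part1 y v hv
    rcases mul_eq_zero.mp this with h | h
    · exact absurd h hy
    · exact sub_eq_zero.mp h
  refine ⟨y, ⟨hy, heval⟩, ?_⟩
  rintro y' ⟨hy', -⟩
  have := heval (delta y') (hAeDelta y')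
  by_contra hne
  simp [delta, Ne.symm hne] at this
  exact hy' this
end
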